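/- Quantum teleportation correctness for measurement outcome 0: if the three-qubit state (ordered z,x,y) is α(1/√2)(|000⟩+|011⟩) + β(1/√2)(|100⟩+|111⟩), then after applying CNot to qubits (z,x), then H to z, the coefficient vector restricted to z=0, x=0 is (1/2)(α|0⟩ + β|1⟩) on the y component, so applying σ₀ = I to y yields the teleported state α|0⟩ + β|1⟩ up to normalization. -/

import Mathlib

/-- Initial three-qubit state (ordered z,x,y):
`α(1/√2)(|000⟩+|011⟩) + β(1/√2)(|100⟩+|111⟩)`. -/
noncomputable def psi (α β : ℂ) : Fin 2 × Fin 2 × Fin 2 → ℂ :=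
  fun p => (if p.1 = 0 then α else β) * ((1 / Real.sqrt 2 : ℝ) : ℂ) *
    (if p.2.1 = p.2.2 then 1 else 0)

/-- CNot on qubits (z,x): flip x when z = 1 (coefficient permutation). -/
def cnot12 (φ : Fin 2 × Fin 2 × Fin 2 → ℂ) : Fin 2 × Fin 2 × Fin 2 → ℂ :=
  fun p => φ (p.1, p.1 + p.2.1, p.2.2)

/-- Hadamard on the first qubit z. -/
noncomputable def h1 (φ : Fin 2 × Fin 2 × Fin 2 → ℂ) : Fin 2 × Fin 2 × Fin 2 → ℂ :=
  fun p => ((1 / Real.sqrt 2 : ℝ) : ℂ) *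
    (φ (0, p.2.1, p.2.2) + (if p.1 = 1 then -1 else 1) * φ (1, p.2.1, p.2.2))

theorem ofReal_one_div_sqrt_two_mul_self :
    ((1 / Real.sqrt 2 : ℝ) : ℂ) * ((1 / Real.sqrt 2 : ℝ) : ℂ) = 1 / 2 := by
  rw [← Complex.ofReal_mul, div_mul_div_comm, one_mul, Real.mul_self_sqrt zero_le_two]
  norm_num

theorem h1_cnot12_apply_zero_zero (φ : Fin 2 × Fin 2 × Fin 2 → ℂ) (y : Fin 2) :
    h1 (cnot12 φ) (0, 0, y) = ((1 / Real.sqrt 2 : ℝ) : ℂ) * (φ (0, 0, y) + φ (1, 1, y)) := by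
  simp [h1, cnot12]

theorem h1_cnot12_psi_apply_zero_zero (α β : ℂ) (y : Fin 2) :
    h1 (cnot12 (psi α β)) (0, 0, y) = (if y = 0 then α else β) / 2 := by
  have hc := ofReal_one_div_sqrt_two_mul_self
  rw [h1_cnot12_apply_zero_zero]
  simp only [psi]
  -- keeps `simp` from rewriting the amplitude `1 / √2` into `(√2)⁻¹`, out of reach of `hc`
  generalize ((1 / Real.sqrt 2 : ℝ) : ℂ) = c at hc ⊢
  fin_cases y <;>
    simp only [↓reduceIte, Fin.isValue, Fin.zero_eta, Fin.mk_one, one_ne_zero, zero_ne_one,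
      mul_one, mul_zero, add_zero, zero_add]
  · linear_combination α * hc
  · linear_combination β * hc

theorem teleportation_outcome_zero (α β : ℂ) :
    h1 (cnot12 (psi α β)) (0, 0, 0) = α / 2 ∧
    h1 (cnot12 (psi α β)) (0, 0, 1) = β / 2 :=
  ⟨h1_cnot12_psi_apply_zero_zero α β 0, h1_cnot12_psi_apply_zero_zero α β 1⟩
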